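/- arXiv:1301.1408 — 2 statements merged into one kernel-verified Lean document; each statement's English description precedes it below -/
import Mathlib

section
/- For every complex number t, one has str(exp(−t L)) = χ(G), where exp(−t L) is the matrix exponential of −t L. -/
open Matrix Finset BigOperators

variable {V : Type*} [Fintype V] [LinearOrder V]

/-- Incidence coefficient between finsets `t` and `s`: it is `(-1)^i` if `s` is obtained from `t`
by deleting its `i`-th vertex (in the linear order on vertices), and `0` otherwise. This encodes
the exterior derivative `(d f)(x_0,…,x_{k+1}) = ∑ i (−1)^i f(x_0,…,x̂_i,…,x_{k+1})` on simplices
whose vertices are ordered increasingly. -/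
def dEntry (t s : Finset V) : ℝ :=
  ∑ v ∈ t, if s = t.erase v then (-1 : ℝ) ^ (t.filter (· < v)).card else 0

variable (G : SimpleGraph V) [DecidableRel G.Adj]

/-- The set `𝒢_k` of `k`-simplices of `G`, i.e. the complete subgraphs on `k+1` vertices,
encoded as the `(k+1)`-cliques of `G`.  `Ω_k = Cl G k → ℝ` is the space of `k`-forms. -/
abbrev Cl (k : ℕ) := {s : Finset V // s ∈ G.cliqueFinset (k + 1)}

/-- The set `𝒢` of all simplices (nonempty complete subgraphs) of `G`; the total space of forms
is `Ω = ⊕_k Ω_k = Simp G → ℝ`. -/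
abbrev Simp := {s : Finset V // s.Nonempty ∧ s ∈ G.cliqueFinset s.card}

/-- The exterior derivative `d_k : Ω_k → Ω_{k+1}` as a matrix (its transpose is `d_k^*`). -/
def dMat (k : ℕ) : Matrix (Cl G (k + 1)) (Cl G k) ℝ := fun t s => dEntry t.1 s.1

/-- The Laplace–Beltrami block `L_p = d_p^* d_p + d_{p-1} d_{p-1}^*` on `Ω_p` (with `d_{-1} = 0`). -/
def Lmat : (p : ℕ) → Matrix (Cl G p) (Cl G p) ℝ
  | 0 => (dMat G 0)ᵀ * dMat G 0
  | (k + 1) => (dMat G (k + 1))ᵀ * dMat G (k + 1) + dMat G k * (dMat G k)ᵀ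

/-- The total exterior derivative `d = ⊕_k d_k` on `Ω`, as a matrix on the simplex set. -/
def dTot : Matrix (Simp G) (Simp G) ℝ := fun t s => dEntry t.1 s.1

/-- The Dirac operator `D = d + d^*` of `G`, as a symmetric matrix on the simplex set. -/
def Dmat : Matrix (Simp G) (Simp G) ℝ := dTot G + (dTot G)ᵀ

/-- The Euler characteristic `χ(G) = ∑_k (−1)^k v_k = ∑_{x ∈ 𝒢} (−1)^{dim x}`. -/
def chi : ℤ := ∑ s : Simp G, (-1) ^ (s.1.card - 1)

/-- The supertrace `str(A) = tr(γ A)` where `γ` acts by `(−1)^k` on `Ω_k`. -/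
def str {R : Type*} [CommRing R] (A : Matrix (Simp G) (Simp G) R) : R :=
  ∑ s : Simp G, (-1) ^ (s.1.card - 1) * A s s

/-- The `k`-th Betti number `b_k = dim ker d_k − rank d_{k−1}` (with `d_{−1} = 0`). -/
noncomputable def betti : ℕ → ℕ
  | 0 => Module.finrank ℝ (LinearMap.ker (dMat G 0).mulVecLin)
  | (k + 1) => Module.finrank ℝ (LinearMap.ker (dMat G (k + 1)).mulVecLin) - (dMat G k).rank

/-!
The grading operator `γ = diag((-1)^dim x)` anticommutes with the Dirac operator `D`, because
`d` raises the dimension of a simplex by exactly one. Cyclicity of the trace then gives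
`str(D^(n+1)) = tr(γ D D^n) = -tr(D γ D^n) = -tr(γ D^n D) = -str(D^(n+1))`, so every positive
power of `D`, in particular every positive power of `L = D²`, has supertrace zero. Applying the
continuous functional `str` to the exponential series of `-tL` leaves only its constant term,
and `str 1 = χ(G)`.
-/

theorem Matrix.trace_mul_pow_succ_eq_zero_of_mul_eq_neg {n R : Type*} [Fintype n] [DecidableEq n]
    [CommRing R] [IsAddTorsionFree R] {γ A : Matrix n n R} (h : γ * A = -(A * γ)) (m : ℕ) :
    trace (γ * A ^ (m + 1)) = 0 := by
  refine self_eq_neg.mp ?_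
  calc trace (γ * A ^ (m + 1)) = trace (γ * A * A ^ m) := by rw [pow_succ', mul_assoc]
    _ = -trace (A * (γ * A ^ m)) := by rw [h, neg_mul, trace_neg, mul_assoc]
    _ = -trace (γ * A ^ (m + 1)) := by rw [trace_mul_comm, mul_assoc, ← pow_succ]

theorem ContinuousLinearMap.map_exp_eq_map_one {𝕂 𝔸 E : Type*} [NontriviallyNormedField 𝕂]
    [CharZero 𝕂] [ContinuousSMul ℚ 𝕂] [NormedRing 𝔸] [NormedAlgebra 𝕂 𝔸] [CompleteSpace 𝔸]
    [AddCommGroup E] [Module 𝕂 E] [TopologicalSpace E] [T2Space E] (F : 𝔸 →L[𝕂] E) {x : 𝔸}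
    (hx : ∀ m : ℕ, F (x ^ (m + 1)) = 0) :
    F (NormedSpace.exp x) = F 1 := by
  have hsum := (NormedSpace.exp_series_hasSum_exp' (𝕂 := 𝕂) x).mapL F
  refine hsum.unique ?_
  convert hasSum_single (f := fun m : ℕ => F ((m.factorial⁻¹ : 𝕂) • x ^ m)) 0 ?_ using 1
  · simp
  · rintro (_ | m) hm
    · exact absurd rfl hm
    · rw [map_smul, hx, smul_zero]

section MatrixExp

-- `NormedSpace.exp` does not depend on the norm; any submultiplicative one gives its series.
attribute [local instance] Matrix.linftyOpNormedRing Matrix.linftyOpNormedAlgebra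

theorem Matrix.trace_mul_exp_smul_mul_self_of_mul_eq_neg {n 𝕂 : Type*} [Fintype n]
    [DecidableEq n] [RCLike 𝕂] {γ A : Matrix n n 𝕂} (h : γ * A = -(A * γ)) (c : 𝕂) :
    trace (γ * NormedSpace.exp (c • (A * A))) = trace γ := by
  let F : Matrix n n 𝕂 →L[𝕂] 𝕂 := LinearMap.toContinuousLinearMap
    ((traceLinearMap n 𝕂 𝕂).comp (LinearMap.mulLeft 𝕂 γ))
  have hpow (m : ℕ) : F ((c • (A * A)) ^ (m + 1)) = 0 := by
    have hA : (A * A) ^ (m + 1) = A ^ (2 * m + 1 + 1) := by rw [← sq, ← pow_mul]; ring_nf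
    change trace (γ * _) = 0
    rw [smul_pow, Matrix.mul_smul, trace_smul, hA, trace_mul_pow_succ_eq_zero_of_mul_eq_neg h,
      smul_zero]
  have hexp : trace (γ * _) = trace (γ * 1) := F.map_exp_eq_map_one hpow
  rwa [mul_one] at hexp

end MatrixExp

theorem neg_one_pow_pred_eq_neg {M : Type*} [Monoid M] [HasDistribNeg M] {a b : ℕ} (ha : a ≠ 0)
    (h : a + 1 = b) : (-1 : M) ^ (b - 1) = -(-1) ^ (a - 1) := by
  obtain ⟨a, rfl⟩ := Nat.exists_eq_succ_of_ne_zero ha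
  subst h
  simp [pow_succ]

omit [Fintype V] in
theorem card_add_one_eq_of_dEntry_ne_zero {t s : Finset V} (h : dEntry t s ≠ 0) :
    s.card + 1 = t.card := by
  contrapose! h
  refine Finset.sum_eq_zero fun v hv => if_neg ?_
  rintro rfl
  exact h (Finset.card_erase_add_one hv)

theorem card_add_one_eq_or_of_Dmat_ne_zero {s u : Simp G} (h : Dmat G s u ≠ 0) :
    u.1.card + 1 = s.1.card ∨ s.1.card + 1 = u.1.card := by
  by_contra! hc
  apply h
  change dEntry s.1 u.1 + dEntry u.1 s.1 = 0
  rw [not_imp_comm.mp card_add_one_eq_of_dEntry_ne_zero hc.1,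
    not_imp_comm.mp card_add_one_eq_of_dEntry_ne_zero hc.2, add_zero]

def grading (R : Type*) [CommRing R] : Matrix (Simp G) (Simp G) R :=
  diagonal fun s => (-1) ^ (s.1.card - 1)

variable {R : Type*} [CommRing R]

theorem str_eq_trace_grading_mul (A : Matrix (Simp G) (Simp G) R) :
    str G A = trace (grading G R * A) := by
  simp [str, grading, trace, diagonal_mul]

theorem trace_grading : trace (grading G R) = chi G := by
  simp [grading, chi, trace_diagonal]

theorem grading_mul_Dmat_map (f : ℝ →+* R) :
    grading G R * (Dmat G).map f = -((Dmat G).map f * grading G R) := by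
  ext s u
  simp only [grading, diagonal_mul, Matrix.neg_apply, mul_diagonal, map_apply]
  by_cases h : Dmat G s u = 0
  · simp [h]
  have hs := s.2.1.card_ne_zero
  have hu := u.2.1.card_ne_zero
  rcases card_add_one_eq_or_of_Dmat_ne_zero G h with h' | h'
  · rw [neg_one_pow_pred_eq_neg hu h']; ring
  · rw [neg_one_pow_pred_eq_neg hs h']; ring

/-- **McKean–Singer.** For every complex number `t`, `str(exp(−t L)) = χ(G)`,
where `L = D²` is the Laplace–Beltrami operator. -/
theorem mcKeanSinger (t : ℂ) :
    str G (NormedSpace.exp (-(t • ((Dmat G * Dmat G).map ((↑·) : ℝ → ℂ))))) = (chi G : ℂ) := by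
  have hL : (Dmat G * Dmat G).map ((↑·) : ℝ → ℂ) =
      (Dmat G).map Complex.ofRealHom * (Dmat G).map Complex.ofRealHom :=
    Matrix.map_mul (f := Complex.ofRealHom)
  rw [hL, ← neg_smul, str_eq_trace_grading_mul,
    trace_mul_exp_smul_mul_self_of_mul_eq_neg (grading_mul_Dmat_map G _), trace_grading]
end

section
/- The number of strictly positive eigenvalues of the Dirac operator D, counted with multiplicity (equivalently, the number of pairs {λ, −λ} of nonzero eigenvalues), equals the sign-less Euler–Poincaré number Σ_k (v_k − b_k)/2. -/
open Matrix Finset BigOperators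

variable {V : Type*} [Fintype V] [LinearOrder V]

variable (G : SimpleGraph V) [DecidableRel G.Adj]

/-!
The sign `γ = (-1)^k` on `Ω_k` anticommutes with `D = d + d*`, so `D` and `-D` are
conjugate and the spectrum of `D` is symmetric about `0`: twice the number of positive eigenvalues
is `rank D`. Because `d² = 0`, a form is killed by `D` exactly when it is killed by both `d` and
`d*`, and `ker d + ker d*` is everything, as `range d* ⊆ ker d*` is a complement of `ker d`;
hence `rank D = 2 rank d`. The total `d` is
the direct sum of the blocks `d_k : Ω_k → Ω_{k+1}`, so `rank d = ∑ rank d_k`, while rank–nullity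
gives `v_k - b_k = rank d_k + rank d_{k-1}`, which sums to `2 ∑ rank d_k`.
-/

namespace Matrix

variable {m n R : Type*} [Fintype n]

theorem rank_add_finrank_ker_mulVecLin [Field R] (A : Matrix m n R) :
    A.rank + Module.finrank R (LinearMap.ker A.mulVecLin) = Fintype.card n := by
  rw [rank, LinearMap.finrank_range_add_finrank_ker, Module.finrank_fintype_fun_eq_card]

section LinearOrderedField

variable [Field R] [LinearOrder R] [IsStrictOrderedRing R]

theorem self_mul_transpose_mulVec_eq_zero [Fintype m] (A : Matrix m n R) (v : m → R) :
    (A * Aᵀ) *ᵥ v = 0 ↔ Aᵀ *ᵥ v = 0 := by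
  have := SetLike.ext_iff.1 (ker_mulVecLin_transpose_mul_self Aᵀ) v
  rwa [transpose_transpose, LinearMap.mem_ker, LinearMap.mem_ker, mulVecLin_apply,
    mulVecLin_apply] at this

variable {A : Matrix n n R}

theorem ker_add_transpose_of_mul_self_eq_zero (hA : A * A = 0) :
    LinearMap.ker (A + Aᵀ).mulVecLin =
      LinearMap.ker A.mulVecLin ⊓ LinearMap.ker Aᵀ.mulVecLin := by
  ext x
  simp only [LinearMap.mem_ker, Submodule.mem_inf, mulVecLin_apply, add_mulVec]
  refine ⟨fun hx => ?_, fun ⟨h₁, h₂⟩ => by rw [h₁, h₂, add_zero]⟩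
  have hAt : Aᵀ *ᵥ x = 0 := (self_mul_transpose_mulVec_eq_zero A x).1 <| by
    simpa only [mulVec_add, mulVec_mulVec, hA, zero_mulVec, zero_add, mulVec_zero] using
      congrArg (A *ᵥ ·) hx
  rw [hAt, add_zero] at hx
  exact ⟨hx, hAt⟩

theorem ker_sup_ker_transpose_of_mul_self_eq_zero (hA : A * A = 0) :
    LinearMap.ker A.mulVecLin ⊔ LinearMap.ker Aᵀ.mulVecLin = ⊤ := by
  have hdisj : Disjoint (LinearMap.ker A.mulVecLin) (LinearMap.range Aᵀ.mulVecLin) := by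
    rw [Submodule.disjoint_def]
    rintro _ hx ⟨y, rfl⟩
    exact (self_mul_transpose_mulVec_eq_zero A y).1 (by rwa [← mulVec_mulVec])
  have hle : LinearMap.range Aᵀ.mulVecLin ≤ LinearMap.ker Aᵀ.mulVecLin := by
    rintro _ ⟨y, rfl⟩
    rw [LinearMap.mem_ker, mulVecLin_apply, mulVecLin_apply, mulVec_mulVec, ← transpose_mul, hA,
      transpose_zero, zero_mulVec]
  have hdim := Submodule.finrank_sup_add_finrank_inf_eq (LinearMap.ker A.mulVecLin)
    (LinearMap.range Aᵀ.mulVecLin)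
  rw [hdisj.eq_bot, finrank_bot, add_zero, ← rank, rank_transpose, add_comm,
    rank_add_finrank_ker_mulVecLin, ← Module.finrank_fintype_fun_eq_card R] at hdim
  exact eq_top_mono (sup_le_sup_left hle _) (Submodule.eq_top_of_finrank_eq hdim)

theorem rank_add_transpose_of_mul_self_eq_zero (hA : A * A = 0) :
    (A + Aᵀ).rank = 2 * A.rank := by
  have hdim := Submodule.finrank_sup_add_finrank_inf_eq (LinearMap.ker A.mulVecLin)
    (LinearMap.ker Aᵀ.mulVecLin)
  rw [ker_sup_ker_transpose_of_mul_self_eq_zero hA, finrank_top,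
    Module.finrank_fintype_fun_eq_card, ← ker_add_transpose_of_mul_self_eq_zero hA] at hdim
  have h₁ := rank_add_finrank_ker_mulVecLin A
  have h₂ := rank_add_finrank_ker_mulVecLin Aᵀ
  have h₃ := rank_add_finrank_ker_mulVecLin (A + Aᵀ)
  rw [rank_transpose] at h₂
  omega

end LinearOrderedField

open Polynomial

theorem charpoly_neg_of_mul_mul_eq_neg [CommRing R] [DecidableEq n] {A γ : Matrix n n R}
    (hγ : γ * γ = 1) (h : γ * A * γ = -A) : (-A).charpoly = A.charpoly := by
  rw [← h, mul_assoc, charpoly_mul_comm, mul_assoc, hγ, mul_one]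

namespace IsHermitian

variable {𝕜 : Type*} [RCLike 𝕜] [DecidableEq n] {A : Matrix n n 𝕜}

theorem charpoly_neg_eq (hA : A.IsHermitian) :
    (-A).charpoly = ∏ i, (X - C ((-hA.eigenvalues i : ℝ) : 𝕜)) := by
  conv_lhs => rw [hA.spectral_theorem, ← map_neg, Unitary.conjStarAlgAut_apply,
    charpoly_mul_comm, ← mul_assoc]
  simp [diagonal_neg, charpoly_diagonal]

theorem map_neg_eigenvalues_of_charpoly_neg (hA : A.IsHermitian)
    (h : (-A).charpoly = A.charpoly) :
    (univ.val.map hA.eigenvalues).map Neg.neg = univ.val.map hA.eigenvalues := by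
  have roots_prod (g : n → ℝ) :
      (∏ i, (X - C ((g i : ℝ) : 𝕜))).roots = (univ.val.map g).map RCLike.ofReal := by
    rw [Finset.prod_eq_multiset_prod,
      ← roots_multiset_prod_X_sub_C ((univ.val.map g).map RCLike.ofReal), Multiset.map_map,
      Multiset.map_map]
    rfl
  have hroots := congrArg roots (hA.charpoly_neg_eq.symm.trans (h.trans hA.charpoly_eq))
  rw [roots_prod, roots_prod] at hroots
  rw [Multiset.map_map]
  exact Multiset.map_injective RCLike.ofReal_injective hroots

theorem card_pos_eigenvalues_eq_card_neg (hA : A.IsHermitian) (h : (-A).charpoly = A.charpoly) :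
    Fintype.card {i // 0 < hA.eigenvalues i} = Fintype.card {i // hA.eigenvalues i < 0} := by
  have card_eq (p : ℝ → Prop) [DecidablePred p] :
      Fintype.card {i // p (hA.eigenvalues i)} = (univ.val.map hA.eigenvalues).countP p := by
    rw [Fintype.card_subtype, Multiset.countP_map]
    rfl
  rw [card_eq (0 < ·), card_eq (· < 0)]
  conv_lhs => rw [← map_neg_eigenvalues_of_charpoly_neg hA h]
  rw [Multiset.countP_map, Multiset.countP_eq_card_filter]
  simp only [Left.neg_pos_iff]

theorem two_mul_card_pos_eigenvalues (hA : A.IsHermitian) (h : (-A).charpoly = A.charpoly) :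
    2 * Fintype.card {i // 0 < hA.eigenvalues i} = A.rank := by
  have hne : Fintype.card {i // hA.eigenvalues i ≠ 0} =
      Fintype.card {i // 0 < hA.eigenvalues i ∨ hA.eigenvalues i < 0} :=
    Fintype.card_congr (Equiv.subtypeEquivRight fun i => ne_comm.trans ne_iff_lt_or_gt)
  rw [hA.rank_eq_card_non_zero_eigs, hne, Fintype.card_subtype_or_disjoint, two_mul,
    card_pos_eigenvalues_eq_card_neg hA h]
  exact Pi.disjoint_iff.2 fun i => disjoint_iff_inf_le.2 fun h => h.1.asymm h.2

end IsHermitian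

end Matrix

theorem Submodule.finrank_pi_univ {ι R : Type*} [Fintype ι] [Field R] {φ : ι → Type*}
    [∀ i, AddCommGroup (φ i)] [∀ i, Module R (φ i)] [∀ i, FiniteDimensional R (φ i)]
    (p : ∀ i, Submodule R (φ i)) :
    Module.finrank R (Submodule.pi Set.univ p) = ∑ i, Module.finrank R (p i) := by
  have hrange :
      Submodule.pi Set.univ p = LinearMap.range (LinearMap.piMap fun i => (p i).subtype) :=
    SetLike.coe_injective <| by
      rw [LinearMap.coe_range, LinearMap.coe_piMap, Set.range_piMap]
      simp
  rw [hrange, LinearMap.finrank_range_of_inj, Module.finrank_pi_fintype]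
  exact fun x y h => funext fun i => Subtype.ext (congrFun h i)

section Incidence

variable {α : Type*} [LinearOrder α]

theorem exists_eq_erase_of_dEntry_ne_zero {t s : Finset α} (h : dEntry t s ≠ 0) :
    ∃ v ∈ t, s = t.erase v := by
  by_contra! hs
  exact h (Finset.sum_eq_zero fun v hv => if_neg (hs v hv))

theorem card_add_one_of_dEntry_ne_zero {t s : Finset α} (h : dEntry t s ≠ 0) :
    s.card + 1 = t.card := by
  obtain ⟨v, hv, rfl⟩ := exists_eq_erase_of_dEntry_ne_zero h
  exact Finset.card_erase_add_one hv

theorem sum_dEntry_mul [Fintype α] (t : Finset α) (f : Finset α → ℝ) :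
    ∑ u, dEntry t u * f u = ∑ v ∈ t, (-1) ^ #{x ∈ t | x < v} * f (t.erase v) := by
  simp only [dEntry, Finset.sum_mul, ite_mul, zero_mul]
  rw [Finset.sum_comm]
  simp

theorem neg_one_pow_card_erase_mul_of_lt {t : Finset α} {v w : α} (hv : v ∈ t) (hvw : v < w) :
    (-1 : ℝ) ^ #{x ∈ t | x < v} * (-1) ^ #{x ∈ t.erase v | x < w} =
      -((-1) ^ #{x ∈ t | x < w} * (-1) ^ #{x ∈ t.erase w | x < v}) := by
  have hvw' : v ∈ {x ∈ t | x < w} := Finset.mem_filter.2 ⟨hv, hvw⟩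
  have hwv : w ∉ {x ∈ t | x < v} := fun h => (Finset.mem_filter.1 h).2.not_gt hvw
  rw [Finset.filter_erase, Finset.filter_erase, Finset.erase_eq_of_notMem hwv,
    Finset.card_erase_of_mem hvw', ← Nat.sub_add_cancel (Finset.card_pos.2 ⟨v, hvw'⟩)]
  simp only [Nat.add_sub_cancel, pow_succ]
  ring

theorem neg_one_pow_card_erase_mul_add {t : Finset α} {v w : α} (hv : v ∈ t) (hw : w ∈ t)
    (hvw : v ≠ w) :
    (-1 : ℝ) ^ #{x ∈ t | x < v} * (-1) ^ #{x ∈ t.erase v | x < w} +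
      (-1) ^ #{x ∈ t | x < w} * (-1) ^ #{x ∈ t.erase w | x < v} = 0 := by
  rcases hvw.lt_or_gt with h | h
  · rw [neg_one_pow_card_erase_mul_of_lt hv h, neg_add_cancel]
  · rw [neg_one_pow_card_erase_mul_of_lt hw h, add_neg_cancel]

theorem sum_dEntry_mul_dEntry [Fintype α] (t s : Finset α) :
    ∑ u, dEntry t u * dEntry u s = 0 := by
  set F : α → α → ℝ := fun v w => if s = (t.erase v).erase w then
    (-1) ^ #{x ∈ t | x < v} * (-1) ^ #{x ∈ t.erase v | x < w} else 0
  have hF : ∑ u, dEntry t u * dEntry u s = ∑ v ∈ t, ∑ w ∈ t.erase v, F v w := by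
    rw [sum_dEntry_mul]
    simp only [dEntry, Finset.mul_sum, mul_ite, mul_zero, F]
  have hswap : ∑ v ∈ t, ∑ w ∈ t.erase v, F v w = ∑ v ∈ t, ∑ w ∈ t.erase v, F w v :=
    Finset.sum_comm' fun v w => by
      simp only [Finset.mem_erase]
      tauto
  -- deleting `v` then `w`, or `w` then `v`, gives the same face with opposite signs
  have hanti : ∀ v ∈ t, ∀ w ∈ t.erase v, F v w + F w v = 0 := by
    intro v hv w hw
    obtain ⟨hwv, hw⟩ := Finset.mem_erase.1 hw
    simp only [F, Finset.erase_right_comm (a := v)]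
    split_ifs
    · exact neg_one_pow_card_erase_mul_add hv hw hwv.symm
    · exact add_zero 0
  have hsum : ∑ v ∈ t, ∑ w ∈ t.erase v, (F v w + F w v) = 0 :=
    Finset.sum_eq_zero fun v hv => Finset.sum_eq_zero (hanti v hv)
  simp only [Finset.sum_add_distrib] at hsum
  linarith

end Incidence

section Simplices

variable {G}

theorem mem_cliqueFinset_of_dEntry_ne_zero {n : ℕ} {t u : Finset V}
    (ht : t ∈ G.cliqueFinset n) (h : dEntry t u ≠ 0) : u ∈ G.cliqueFinset (n - 1) := by
  obtain ⟨v, hv, rfl⟩ := exists_eq_erase_of_dEntry_ne_zero h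
  exact SimpleGraph.mem_cliqueFinset_iff.2 ((SimpleGraph.mem_cliqueFinset_iff.1 ht).erase_of_mem hv)

theorem nonempty_and_mem_cliqueFinset_card {k : ℕ} {s : Finset V}
    (hs : s ∈ G.cliqueFinset (k + 1)) : s.Nonempty ∧ s ∈ G.cliqueFinset s.card := by
  have hcard : s.card = k + 1 := (SimpleGraph.mem_cliqueFinset_iff.1 hs).card_eq
  exact ⟨Finset.card_pos.1 (by omega), hcard ▸ hs⟩

def Cl.toSimp {k : ℕ} (s : Cl G k) : Simp G := ⟨s.1, nonempty_and_mem_cliqueFinset_card s.2⟩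

theorem Cl.toSimp_injective (k : ℕ) : Function.Injective (Cl.toSimp (G := G) (k := k)) :=
  fun _ _ h => Subtype.ext (congrArg (fun s : Simp G => s.1) h)

theorem Simp.card_pos (s : Simp G) : 0 < s.1.card := Finset.card_pos.2 s.2.1

theorem Simp.mem_cliqueFinset (s : Simp G) : s.1 ∈ G.cliqueFinset (s.1.card - 1 + 1) := by
  rw [Nat.sub_add_cancel s.card_pos]
  exact s.2.2

theorem dMat_mul_dMat (k : ℕ) : dMat G (k + 1) * dMat G k = 0 := by
  ext t s
  rw [mul_apply, Matrix.zero_apply, ← sum_dEntry_mul_dEntry t.1 s.1]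
  refine Fintype.sum_of_injective Subtype.val Subtype.val_injective _ _ (fun u hu => ?_)
    fun _ => rfl
  by_contra h
  exact hu ⟨⟨u, mem_cliqueFinset_of_dEntry_ne_zero t.2 (left_ne_zero_of_mul h)⟩, rfl⟩

theorem dTot_mul_dTot : dTot G * dTot G = 0 := by
  ext t s
  rw [mul_apply, Matrix.zero_apply, ← sum_dEntry_mul_dEntry t.1 s.1]
  refine Fintype.sum_of_injective Subtype.val Subtype.val_injective _ _ (fun u hu => ?_)
    fun _ => rfl
  by_contra h
  have hcard := card_add_one_of_dEntry_ne_zero (right_ne_zero_of_mul h)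
  have hu' := mem_cliqueFinset_of_dEntry_ne_zero t.2.2 (left_ne_zero_of_mul h)
  rw [← card_add_one_of_dEntry_ne_zero (left_ne_zero_of_mul h), Nat.add_sub_cancel] at hu'
  exact hu ⟨⟨u, Finset.card_pos.1 (by omega), hu'⟩, rfl⟩

variable (G) in
def simplexEquivSigma (N : ℕ) (hN : Fintype.card V ≤ N) : Simp G ≃ Σ k : Fin N, Cl G k where
  toFun s := ⟨⟨s.1.card - 1, by have := Finset.card_le_univ s.1; have := s.card_pos; omega⟩,
    ⟨s.1, s.mem_cliqueFinset⟩⟩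
  invFun p := p.2.toSimp
  left_inv _ := rfl
  right_inv p := Sigma.subtype_ext (Fin.ext <| by
    simp [Cl.toSimp, (SimpleGraph.mem_cliqueFinset_iff.1 p.2.2).card_eq]) rfl

theorem card_simp_eq_sum (N : ℕ) (hN : Fintype.card V ≤ N) :
    Fintype.card (Simp G) = ∑ k ∈ range N, (G.cliqueFinset (k + 1)).card := by
  rw [Fintype.card_congr (simplexEquivSigma G N hN), Fintype.card_sigma,
    ← Fin.sum_univ_eq_sum_range (fun k => (G.cliqueFinset (k + 1)).card)]
  simp

variable (G) in
def formsEquiv (N : ℕ) (hN : Fintype.card V ≤ N) :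
    (Simp G → ℝ) ≃ₗ[ℝ] ((k : Fin N) → Cl G k → ℝ) :=
  (LinearEquiv.funCongrLeft ℝ ℝ (simplexEquivSigma G N hN).symm).trans
    (LinearEquiv.piCurry ℝ fun _ _ => ℝ)

theorem dTot_mulVec_toSimp {k : ℕ} (x : Simp G → ℝ) (t : Cl G (k + 1)) :
    (dTot G *ᵥ x) t.toSimp = (dMat G k *ᵥ fun s => x s.toSimp) t := by
  refine (Fintype.sum_of_injective _ (Cl.toSimp_injective k) _ _ (fun u hu => ?_) fun _ => rfl).symm
  by_contra h
  exact hu ⟨⟨u, mem_cliqueFinset_of_dEntry_ne_zero t.2 (left_ne_zero_of_mul h)⟩, rfl⟩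

theorem dTot_mulVec_of_card_eq_one (x : Simp G → ℝ) {t : Simp G} (ht : t.1.card = 1) :
    (dTot G *ᵥ x) t = 0 :=
  Finset.sum_eq_zero fun u _ => by
    by_contra h
    have := card_add_one_of_dEntry_ne_zero (left_ne_zero_of_mul h)
    have := u.card_pos
    omega

theorem dTot_mulVec_eq_zero_iff {N : ℕ} {hN : Fintype.card V ≤ N} (x : Simp G → ℝ) :
    dTot G *ᵥ x = 0 ↔ ∀ k : Fin N, dMat G k *ᵥ formsEquiv G N hN x k = 0 := by
  refine ⟨fun hx k => funext fun t => ?_, fun hx => funext fun t => ?_⟩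
  · exact (dTot_mulVec_toSimp x t).symm.trans (congrFun hx _)
  · obtain ⟨k, hk⟩ := Nat.exists_eq_add_one_of_ne_zero t.card_pos.ne'
    cases k with
    | zero => exact dTot_mulVec_of_card_eq_one x hk
    | succ k =>
      have hkN : k < N := by have := Finset.card_le_univ t.1; omega
      have ht : t.1 ∈ G.cliqueFinset (k + 1 + 1) := hk ▸ t.2.2
      exact (dTot_mulVec_toSimp (t := ⟨t.1, ht⟩) x).trans (congrFun (hx ⟨k, hkN⟩) _)

theorem finrank_ker_dTot (N : ℕ) (hN : Fintype.card V ≤ N) :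
    Module.finrank ℝ (LinearMap.ker (dTot G).mulVecLin) =
      ∑ k ∈ range N, Module.finrank ℝ (LinearMap.ker (dMat G k).mulVecLin) := by
  have hker : LinearMap.ker (dTot G).mulVecLin = (Submodule.pi Set.univ fun k : Fin N =>
      LinearMap.ker (dMat G k).mulVecLin).comap (formsEquiv G N hN).toLinearMap := by
    ext x
    simp [dTot_mulVec_eq_zero_iff (hN := hN)]
  rw [hker, Submodule.comap_equiv_eq_map_symm, LinearEquiv.finrank_map_eq,
    Submodule.finrank_pi_univ, Fin.sum_univ_eq_sum_range (fun k =>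
      Module.finrank ℝ (LinearMap.ker (dMat G k).mulVecLin))]

theorem rank_dTot (N : ℕ) (hN : Fintype.card V ≤ N) :
    (dTot G).rank = ∑ k ∈ range N, (dMat G k).rank := by
  have hdim : ∑ k ∈ range N, ((dMat G k).rank +
      Module.finrank ℝ (LinearMap.ker (dMat G k).mulVecLin)) =
      ∑ k ∈ range N, (G.cliqueFinset (k + 1)).card :=
    Finset.sum_congr rfl fun k _ => by
      rw [rank_add_finrank_ker_mulVecLin, Fintype.card_coe]
  have := rank_add_finrank_ker_mulVecLin (dTot G)
  rw [Finset.sum_add_distrib] at hdim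
  rw [finrank_ker_dTot N hN, card_simp_eq_sum N hN] at this
  omega

theorem card_sub_betti_zero : (G.cliqueFinset 1).card - betti G 0 = (dMat G 0).rank := by
  have := rank_add_finrank_ker_mulVecLin (dMat G 0)
  rw [Fintype.card_coe] at this
  simp only [zero_add] at this
  rw [betti]
  omega

theorem card_sub_betti_succ (k : ℕ) :
    (G.cliqueFinset (k + 1 + 1)).card - betti G (k + 1) =
      (dMat G (k + 1)).rank + (dMat G k).rank := by
  have hle := rank_add_rank_le_card_of_mul_eq_zero (dMat_mul_dMat (G := G) k)
  have := rank_add_finrank_ker_mulVecLin (dMat G (k + 1))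
  rw [Fintype.card_coe] at this hle
  rw [betti]
  omega

theorem sum_range_succ_card_sub_betti (M : ℕ) :
    ∑ k ∈ range (M + 1), ((G.cliqueFinset (k + 1)).card - betti G k) =
      ∑ k ∈ range (M + 1), (dMat G k).rank + ∑ k ∈ range M, (dMat G k).rank := by
  induction M with
  | zero => simp [card_sub_betti_zero]
  | succ M ih =>
    rw [sum_range_succ, ih, card_sub_betti_succ, sum_range_succ _ (M + 1), sum_range_succ _ M]
    ring

theorem rank_dMat_eq_zero {k : ℕ} (hk : Fintype.card V ≤ k + 1) : (dMat G k).rank = 0 := by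
  have hempty : Fintype.card (Cl G (k + 1)) = 0 :=
    Fintype.card_eq_zero_iff.2 ⟨fun s => by
      have := Finset.card_le_univ s.1
      have := (SimpleGraph.mem_cliqueFinset_iff.1 s.2).card_eq
      omega⟩
  exact Nat.le_zero.1 ((rank_le_card_height _).trans_eq hempty)

theorem sum_card_sub_betti (N : ℕ) (hN : Fintype.card V ≤ N) :
    ∑ k ∈ range N, ((G.cliqueFinset (k + 1)).card - betti G k) =
      2 * ∑ k ∈ range N, (dMat G k).rank := by
  cases N with
  | zero => simp
  | succ M =>
    rw [sum_range_succ_card_sub_betti, sum_range_succ _ M, rank_dMat_eq_zero (by omega)]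
    ring

variable (G) in
def simplexSign : Matrix (Simp G) (Simp G) ℝ := diagonal fun s => (-1) ^ (s.1.card - 1)

theorem simplexSign_mul_self : simplexSign G * simplexSign G = 1 := by
  rw [simplexSign, diagonal_mul_diagonal, ← diagonal_one]
  simp [← mul_pow]

theorem simplexSign_mul_dTot_mul_simplexSign :
    simplexSign G * dTot G * simplexSign G = -dTot G := by
  ext t s
  rw [simplexSign, mul_diagonal, diagonal_mul, neg_apply]
  by_cases h : dTot G t s = 0
  · simp [h]
  · have := card_add_one_of_dEntry_ne_zero h
    have := s.card_pos
    rw [show t.1.card - 1 = s.1.card - 1 + 1 by omega, pow_succ]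
    have hsq : (-1 : ℝ) ^ (s.1.card - 1) * (-1) ^ (s.1.card - 1) = 1 := by
      rw [← mul_pow]; norm_num
    linear_combination (-dTot G t s) * hsq

theorem charpoly_neg_Dmat : (-Dmat G).charpoly = (Dmat G).charpoly := by
  refine charpoly_neg_of_mul_mul_eq_neg simplexSign_mul_self ?_
  have hT := congrArg transpose (simplexSign_mul_dTot_mul_simplexSign (G := G))
  rw [transpose_mul, transpose_mul, simplexSign, diagonal_transpose, ← mul_assoc,
    transpose_neg] at hT
  rw [Dmat, mul_add, add_mul, simplexSign_mul_dTot_mul_simplexSign, simplexSign, hT, neg_add]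

end Simplices

/-- The number of strictly positive eigenvalues of `D`, counted with multiplicity (equivalently,
the number of pairs `{λ, −λ}` of nonzero eigenvalues), equals the sign-less Euler–Poincaré
number `∑_k (v_k − b_k)/2`. -/
theorem card_positive_dirac_eigenvalues (hD : (Dmat G).IsHermitian)
    (N : ℕ) (hN : Fintype.card V ≤ N) :
    Fintype.card {i // 0 < hD.eigenvalues i} =
      (∑ k ∈ Finset.range N, ((G.cliqueFinset (k + 1)).card - betti G k)) / 2 := by
  have hpos := hD.two_mul_card_pos_eigenvalues charpoly_neg_Dmat
  have hrank : (Dmat G).rank = 2 * (dTot G).rank :=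
    rank_add_transpose_of_mul_self_eq_zero dTot_mul_dTot
  rw [sum_card_sub_betti N hN, ← rank_dTot N hN]
  omega
end
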